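/- Let (g̃_t)_{t=1}^T ⊂ ℝ^d with ‖g̃_t‖ ≤ L' for all t, η_t = σ/√t, and τ ∈ ℕ. Then ∑_{t=1}^{T} ∑_{k=1}^{min(τ, t−1)} η_{max(1, t−τ)}·‖g̃_{t−k}‖·‖g̃_t‖ ≤ σL'²·(τ²/2 + 2τ√T). -/

import Mathlib

private lemma aux_sqrt_sum (n : ℕ) :
    ∑ s ∈ Finset.Icc 1 n, 1 / Real.sqrt s ≤ 2 * Real.sqrt n := by
  induction n with
  | zero => simp
  | succ n ih =>
    rw [Finset.sum_Icc_succ_top (by omega : 1 ≤ n + 1)]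
    have ha : Real.sqrt n ^ 2 = n := Real.sq_sqrt (by positivity)
    have hb : Real.sqrt ((n : ℝ) + 1) ^ 2 = (n : ℝ) + 1 := Real.sq_sqrt (by positivity)
    have ha0 : (0:ℝ) ≤ Real.sqrt n := Real.sqrt_nonneg _
    have hb0 : (0:ℝ) < Real.sqrt ((n : ℝ) + 1) := Real.sqrt_pos.mpr (by positivity)
    have key : 1 / Real.sqrt ((n:ℝ) + 1) ≤ 2 * Real.sqrt ((n:ℝ)+1) - 2 * Real.sqrt n := by
      rw [div_le_iff₀ hb0]
      nlinarith [sq_nonneg (Real.sqrt ((n:ℝ)+1) - Real.sqrt n)]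
    push_cast
    linarith [ih]

private lemma aux_gauss (n : ℕ) :
    ∑ t ∈ Finset.Icc 1 n, ((t : ℝ) - 1) ≤ (n : ℝ) ^ 2 / 2 := by
  induction n with
  | zero => simp
  | succ n ih =>
    rw [Finset.sum_Icc_succ_top (by omega : 1 ≤ n + 1)]
    push_cast
    nlinarith [ih]

theorem stmt_14 {d : ℕ} (gt : ℕ → EuclideanSpace ℝ (Fin d)) (L' σ : ℝ) (hσ : 0 < σ)
    (T τ : ℕ) (hg : ∀ t, ‖gt t‖ ≤ L') :
    ∑ t ∈ Finset.Icc 1 T, ∑ k ∈ Finset.Icc 1 (min τ (t - 1)),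
        (σ / Real.sqrt (max 1 (t - τ))) * ‖gt (t - k)‖ * ‖gt t‖ ≤
      σ * L' ^ 2 * ((τ : ℝ) ^ 2 / 2 + 2 * τ * Real.sqrt T) := by
  have hL : 0 ≤ L' := le_trans (norm_nonneg _) (hg 0)
  set b : ℕ → ℝ := fun t => if t ≤ τ then ((t : ℝ) - 1) else (τ : ℝ) / Real.sqrt ((t - τ : ℕ)) with hb
  have step1 : ∀ t ∈ Finset.Icc 1 T,
      ∑ k ∈ Finset.Icc 1 (min τ (t - 1)),
        (σ / Real.sqrt (max 1 (t - τ))) * ‖gt (t - k)‖ * ‖gt t‖ ≤ σ * L' ^ 2 * b t := by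
    intro t ht
    simp only [Finset.mem_Icc] at ht
    have hs1 : (1:ℝ) ≤ Real.sqrt (max 1 ((t:ℝ) - τ)) := by
      nth_rewrite 1 [show (1:ℝ) = Real.sqrt 1 by simp]
      exact Real.sqrt_le_sqrt (le_max_left _ _)
    have hs0 : (0:ℝ) < Real.sqrt (max 1 ((t:ℝ) - τ)) := lt_of_lt_of_le one_pos hs1
    have hd0 : (0:ℝ) ≤ σ / Real.sqrt (max 1 ((t:ℝ) - τ)) := by positivity
    have inner : ∑ k ∈ Finset.Icc 1 (min τ (t - 1)),
        (σ / Real.sqrt (max 1 ((t:ℝ) - τ))) * ‖gt (t - k)‖ * ‖gt t‖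
        ≤ ((min τ (t-1) : ℕ) : ℝ) * ((σ / Real.sqrt (max 1 ((t:ℝ) - τ))) * L' * L') := by
      have hk : ∀ k ∈ Finset.Icc 1 (min τ (t-1)),
          (σ / Real.sqrt (max 1 ((t:ℝ) - τ))) * ‖gt (t - k)‖ * ‖gt t‖
          ≤ (σ / Real.sqrt (max 1 ((t:ℝ) - τ))) * L' * L' := by
        intro k _
        gcongr <;> first | exact hg _ | positivity
      calc _ ≤ ∑ k ∈ Finset.Icc 1 (min τ (t-1)),
              (σ / Real.sqrt (max 1 ((t:ℝ) - τ))) * L' * L' := Finset.sum_le_sum hk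
        _ = ((min τ (t-1) : ℕ) : ℝ) * ((σ / Real.sqrt (max 1 ((t:ℝ) - τ))) * L' * L') := by
            rw [Finset.sum_const, Nat.card_Icc]
            simp only [Nat.add_sub_cancel, nsmul_eq_mul]
    refine inner.trans ?_
    by_cases hc : t ≤ τ
    · have htr : ((t:ℝ) : ℝ) ≤ (τ : ℝ) := by exact_mod_cast hc
      have hmax : max (1:ℝ) ((t:ℝ) - τ) = 1 := max_eq_left (by linarith)
      have h2 : min τ (t - 1) = t - 1 := by omega
      have hcast : ((min τ (t-1) : ℕ) : ℝ) = (t : ℝ) - 1 := by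
        rw [h2, Nat.cast_sub ht.1]; norm_num
      rw [hb]
      simp only [hc, if_true]
      rw [hmax, Real.sqrt_one, div_one, hcast]
      exact le_of_eq (by ring)
    · push_neg at hc
      have htr : (τ : ℝ) + 1 ≤ (t : ℝ) := by exact_mod_cast hc
      have h1r : max (1:ℝ) ((t:ℝ) - τ) = ((t - τ : ℕ) : ℝ) := by
        rw [Nat.cast_sub (le_of_lt hc)]
        exact max_eq_right (by linarith)
      have hst : (0:ℝ) < Real.sqrt ((t - τ : ℕ)) := by
        apply Real.sqrt_pos.mpr
        have : 1 ≤ t - τ := by omega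
        exact_mod_cast this
      have hmin : ((min τ (t-1) : ℕ) : ℝ) ≤ (τ : ℝ) := by exact_mod_cast min_le_left _ _
      rw [hb]
      simp only [not_le.mpr hc, if_false]
      rw [h1r]
      rw [show σ * L' ^ 2 * ((τ:ℝ) / Real.sqrt ((t - τ : ℕ)))
          = (τ:ℝ) * (σ / Real.sqrt ((t - τ : ℕ)) * L' * L') by ring]
      exact mul_le_mul hmin le_rfl (by positivity) (by positivity)
  have step2 : ∑ t ∈ Finset.Icc 1 T, b t ≤ (τ : ℝ) ^ 2 / 2 + 2 * τ * Real.sqrt T := by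
    rw [hb, Finset.sum_ite]
    have part1 : ∑ t ∈ (Finset.Icc 1 T).filter (fun t => t ≤ τ), ((t:ℝ) - 1)
        ≤ (τ : ℝ) ^ 2 / 2 := by
      refine le_trans (Finset.sum_le_sum_of_subset_of_nonneg ?_ ?_) (aux_gauss τ)
      · intro x hx
        simp only [Finset.mem_filter, Finset.mem_Icc] at hx ⊢
        omega
      · intro i hi _
        simp only [Finset.mem_Icc] at hi
        have : (1:ℝ) ≤ (i:ℝ) := by exact_mod_cast hi.1
        linarith
    have hfilter : (Finset.Icc 1 T).filter (fun t => ¬ t ≤ τ) = Finset.Icc (τ+1) T := by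
      ext x; simp only [Finset.mem_filter, Finset.mem_Icc]; omega
    have part2 : ∑ t ∈ (Finset.Icc 1 T).filter (fun t => ¬ t ≤ τ),
        (τ : ℝ) / Real.sqrt ((t - τ : ℕ)) ≤ 2 * τ * Real.sqrt T := by
      rw [hfilter]
      by_cases hTτ : T ≤ τ
      · have : Finset.Icc (τ+1) T = ∅ := by
          apply Finset.Icc_eq_empty; omega
        rw [this]; simp; positivity
      · push_neg at hTτ
        have hmap : Finset.map (addRightEmbedding τ) (Finset.Icc 1 (T - τ))
            = Finset.Icc (τ+1) T := by
          rw [Finset.map_add_right_Icc]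
          congr 1 <;> omega
        rw [← hmap, Finset.sum_map]
        have heq : ∀ s ∈ Finset.Icc 1 (T - τ),
            (τ : ℝ) / Real.sqrt (((addRightEmbedding τ s) - τ : ℕ))
            = (τ : ℝ) * (1 / Real.sqrt s) := by
          intro s _
          simp only [addRightEmbedding_apply]
          rw [show s + τ - τ = s by omega]
          ring
        rw [Finset.sum_congr rfl heq, ← Finset.mul_sum]
        have := aux_sqrt_sum (T - τ)
        have hsq : Real.sqrt ((T - τ : ℕ)) ≤ Real.sqrt T := by
          apply Real.sqrt_le_sqrt
          have : (T - τ : ℕ) ≤ T := by omega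
          exact_mod_cast this
        calc (τ:ℝ) * ∑ s ∈ Finset.Icc 1 (T - τ), 1 / Real.sqrt s
            ≤ (τ:ℝ) * (2 * Real.sqrt ((T - τ : ℕ))) := by
              apply mul_le_mul_of_nonneg_left this (by positivity)
          _ ≤ 2 * τ * Real.sqrt T := by nlinarith [Real.sqrt_nonneg ((T - τ : ℕ) : ℝ)]
    linarith
  calc ∑ t ∈ Finset.Icc 1 T, ∑ k ∈ Finset.Icc 1 (min τ (t - 1)),
        (σ / Real.sqrt (max 1 (t - τ))) * ‖gt (t - k)‖ * ‖gt t‖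
      ≤ ∑ t ∈ Finset.Icc 1 T, σ * L' ^ 2 * b t := Finset.sum_le_sum step1
    _ = σ * L' ^ 2 * ∑ t ∈ Finset.Icc 1 T, b t := by rw [Finset.mul_sum]
    _ ≤ σ * L' ^ 2 * ((τ : ℝ) ^ 2 / 2 + 2 * τ * Real.sqrt T) := by
        apply mul_le_mul_of_nonneg_left step2 (by positivity)
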